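/- arXiv:2102.01662 — 4 statements merged into one kernel-verified Lean document; each statement's English description precedes it below -/
import Mathlib

section
/- Let K, D, L be positive integers with L ≤ D ≤ K, and let R = K mod D. For any finite sequence N_1, ..., N_n of positive integers satisfying N_1 = D, 1 ≤ N_i ≤ D for all i, and N_1 + ... + N_n = K, it holds that ∑_{i=1}^n min(L, N_i) ≥ L·⌊K/D⌋ + min(L, R). -/
/-- `lowResidueCount L D S` counts the `j < S` with `j % D < L`: each complete block of `D`
consecutive numbers contributes `L`, the final partial block of length `S % D` contributes
`min L (S % D)`. -/
def lowResidueCount (L D S : ℕ) : ℕ := L * (S / D) + min L (S % D)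

@[simp]
lemma lowResidueCount_zero (L D : ℕ) : lowResidueCount L D 0 = 0 := by
  simp [lowResidueCount]

lemma lowResidueCount_add_le_of_lt {L D r N : ℕ} (hLD : L ≤ D) (hr : r < D) (hND : N ≤ D) :
    lowResidueCount L D (r + N) ≤ min L r + min L N := by
  unfold lowResidueCount
  rcases lt_or_ge (r + N) D with h | h
  · rw [Nat.div_eq_of_lt h, Nat.mod_eq_of_lt h]
    omega
  · have hdiv : (r + N) / D = 1 := Nat.div_eq_of_lt_le (by omega) (by omega)
    have hmod : (r + N) % D = r + N - D := by
      rw [Nat.mod_eq_sub_mod h, Nat.mod_eq_of_lt (by omega)]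
    rw [hdiv, hmod]
    omega

/-- Any `N ≤ D` consecutive numbers contain at most `min L N` with residue below `L`. -/
lemma lowResidueCount_add_le {L D S N : ℕ} (hLD : L ≤ D) (hND : N ≤ D) :
    lowResidueCount L D (S + N) ≤ lowResidueCount L D S + min L N := by
  rcases Nat.eq_zero_or_pos D with rfl | hD
  · simp [Nat.le_zero.mp hLD, lowResidueCount]
  have hS : S + N = D * (S / D) + (S % D + N) := by
    rw [← add_assoc, Nat.div_add_mod]
  have hstep := lowResidueCount_add_le_of_lt hLD (Nat.mod_lt S hD) hND
  unfold lowResidueCount at hstep ⊢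
  rw [hS, Nat.mul_add_div hD, Nat.mul_add_mod, Nat.mul_add]
  omega

lemma lowResidueCount_sum_le {ι : Type*} (s : Finset ι) (N : ι → ℕ) {L D : ℕ} (hLD : L ≤ D)
    (hND : ∀ i ∈ s, N i ≤ D) :
    lowResidueCount L D (∑ i ∈ s, N i) ≤ ∑ i ∈ s, min L (N i) := by
  classical
  induction s using Finset.induction_on with
  | empty => simp
  | insert a s ha ih =>
    rw [Finset.sum_insert ha, Finset.sum_insert ha, add_comm (N a), add_comm (min L (N a))]
    calc lowResidueCount L D (∑ i ∈ s, N i + N a)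
        ≤ lowResidueCount L D (∑ i ∈ s, N i) + min L (N a) :=
          lowResidueCount_add_le hLD (hND a (Finset.mem_insert_self a s))
      _ ≤ ∑ i ∈ s, min L (N i) + min L (N a) := by
          gcongr
          exact ih fun i hi => hND i (Finset.mem_insert_of_mem hi)

theorem stmt0_general (K D L : ℕ) (hLD : L ≤ D)
    (n : ℕ) (N : Fin n → ℕ)
    (hNub : ∀ i, N i ≤ D)
    (hsum : ∑ i, N i = K) :
    L * (K / D) + min L (K % D) ≤ ∑ i, min L (N i) := by
  subst hsum
  exact lowResidueCount_sum_le Finset.univ N hLD fun i _ => hNub i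

/-- Converse sum bound: for increments N_i with N_1 = D, 1 ≤ N_i ≤ D and total K,
the sum of min(L, N_i) is at least L·⌊K/D⌋ + min(L, K mod D). -/
theorem stmt0 (K D L : ℕ) (hL : 1 ≤ L) (hLD : L ≤ D) (hDK : D ≤ K)
    (n : ℕ) (hn : 0 < n) (N : Fin n → ℕ)
    (hN1 : N ⟨0, hn⟩ = D)
    (hNlb : ∀ i, 1 ≤ N i) (hNub : ∀ i, N i ≤ D)
    (hsum : ∑ i, N i = K) :
    L * (K / D) + min L (K % D) ≤ ∑ i, min L (N i) :=
  stmt0_general K D L hLD n N hNub hsum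
end

section
/- Let K, D, L be positive integers with L ≤ D ≤ K and R = K mod D. The integer linear program: minimize ∑_{j=1}^{L} T_j·j + ∑_{j=L+1}^{D} T_j·L subject to ∑_{j=1}^{D} T_j·j = K, T_j ∈ ℕ for 1 ≤ j < D, and T_D ≥ 1, has optimal value L·⌊K/D⌋ + min(L, R), attained by T_D = ⌊K/D⌋, T_R = 1 (if R > 0), and T_j = 0 otherwise. -/
/-!
Write `K = q D + r` with `r < D`, so that `optValue L D K = L q + min L r`. This function of `K`
is subadditive (when the remainders `r₁, r₂` of `a, b` overflow, i.e. `r₁ + r₂ ≥ D ≥ L`, one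
has `L + min L (r₁ + r₂ - D) ≤ min L r₁ + min L r₂`) and agrees with the per-round cost
`min L j` for `j ≤ D`. Hence any decomposition `K = ∑ T_j j` costs at least `optValue L D K`,
and the decomposition into `q` blocks of size `D` plus one block of size `r` attains it.
-/

open Finset

def optValue (L D K : ℕ) : ℕ := L * (K / D) + min L (K % D)

theorem optValue_add_le {L D : ℕ} (hLD : L ≤ D) (a b : ℕ) :
    optValue L D (a + b) ≤ optValue L D a + optValue L D b := by
  rcases Nat.eq_zero_or_pos D with rfl | hD
  · simp [optValue, Nat.le_zero.mp hLD]
  have ha := Nat.mod_lt a hD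
  have hb := Nat.mod_lt b hD
  unfold optValue
  by_cases hcarry : D ≤ a % D + b % D
  · have hmod := Nat.add_mod_add_of_le_add_mod hcarry
    rw [Nat.add_div_eq_of_le_mod_add_mod hcarry hD, Nat.mul_add, Nat.mul_add]
    omega
  · rw [Nat.add_div_eq_of_add_mod_lt (not_le.mp hcarry),
      Nat.add_mod_of_add_mod_lt (not_le.mp hcarry), Nat.mul_add]
    omega

theorem optValue_mul_le {L D : ℕ} (hLD : L ≤ D) (n a : ℕ) :
    optValue L D (n * a) ≤ n * optValue L D a := by
  simpa using le_sum_of_subadditive (optValue L D) (by simp [optValue])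
    (optValue_add_le hLD) (range n) fun _ => a

theorem optValue_of_le {L D j : ℕ} (hLD : L ≤ D) (hj : j ≤ D) : optValue L D j = min L j := by
  rcases hj.lt_or_eq with hj | rfl
  · simp [optValue, Nat.div_eq_of_lt hj, Nat.mod_eq_of_lt hj]
  · rcases Nat.eq_zero_or_pos j with rfl | hD
    · simp [optValue]
    · simp [optValue, Nat.div_self hD, hLD]

theorem optValue_le_sum {L D : ℕ} (hLD : L ≤ D) (T : ℕ → ℕ) :
    optValue L D (∑ j ∈ Icc 1 D, T j * j) ≤ ∑ j ∈ Icc 1 D, T j * min L j :=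
  calc optValue L D (∑ j ∈ Icc 1 D, T j * j)
      ≤ ∑ j ∈ Icc 1 D, optValue L D (T j * j) :=
        le_sum_of_subadditive _ (by simp [optValue]) (optValue_add_le hLD) _ _
    _ ≤ ∑ j ∈ Icc 1 D, T j * optValue L D j := sum_le_sum fun j _ => optValue_mul_le hLD _ _
    _ = ∑ j ∈ Icc 1 D, T j * min L j :=
        sum_congr rfl fun j hj => by rw [optValue_of_le hLD (mem_Icc.mp hj).2]

theorem sum_Icc_mul_min_eq {L D : ℕ} (hLD : L ≤ D) (T : ℕ → ℕ) :
    ∑ j ∈ Icc 1 D, T j * min L j =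
      ∑ j ∈ Icc 1 L, T j * j + ∑ j ∈ Icc (L + 1) D, T j * L := by
  rw [Icc_add_one_left_eq_Ioc, ← zero_add 1, Icc_add_one_left_eq_Ioc, Icc_add_one_left_eq_Ioc,
    ← sum_Ioc_consecutive _ (Nat.zero_le L) hLD]
  congr 1 <;> refine sum_congr rfl fun j hj => ?_ <;> rw [mem_Ioc] at hj
  · rw [min_eq_right hj.2]
  · rw [min_eq_left (by omega)]

theorem sum_Icc_mul_witness {D R : ℕ} (q : ℕ) (hR : R < D) (w : ℕ → ℕ) :
    ∑ j ∈ Icc 1 D,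
        (if j = D then q else if j = R then (if R = 0 then 0 else 1) else 0) * w j =
      q * w D + if R = 0 then 0 else w R := by
  rw [sum_eq_add D R hR.ne']
  · simp [hR.ne]
  · intro j _ hj
    simp [hj.1, hj.2]
  · intro hDmem
    simp at hDmem
    omega
  · intro hRmem
    obtain rfl : R = 0 := by simp at hRmem; omega
    simp [hR.ne]

/-- The ILP from the converse proof: minimize ∑_{j≤L} T_j·j + ∑_{L<j≤D} T_j·L subject to
∑_{j=1}^D T_j·j = K and T_D ≥ 1, has optimal value L·⌊K/D⌋ + min(L,R), R = K mod D,
attained at T_D = ⌊K/D⌋, T_R = 1 (if R > 0), T_j = 0 otherwise. -/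
theorem stmt1 (K D L : ℕ) (hL : 1 ≤ L) (hLD : L ≤ D) (hDK : D ≤ K)
    (R : ℕ) (hR : R = K % D) :
    (∀ T : ℕ → ℕ, (∑ j ∈ Finset.Icc 1 D, T j * j = K) → 1 ≤ T D →
      L * (K / D) + min L R ≤
        ∑ j ∈ Finset.Icc 1 L, T j * j + ∑ j ∈ Finset.Icc (L + 1) D, T j * L) ∧
    (let T : ℕ → ℕ := fun j =>
        if j = D then K / D else if j = R then (if R = 0 then 0 else 1) else 0
     (∑ j ∈ Finset.Icc 1 D, T j * j = K) ∧ 1 ≤ T D ∧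
      ∑ j ∈ Finset.Icc 1 L, T j * j + ∑ j ∈ Finset.Icc (L + 1) D, T j * L =
        L * (K / D) + min L R) := by
  subst hR
  have hD : 0 < D := hL.trans hLD
  have hRD : K % D < D := Nat.mod_lt K hD
  refine ⟨fun T hT _ => ?_, ?_, by simp only [↓reduceIte]; exact Nat.div_pos hDK hD, ?_⟩
  · rw [← sum_Icc_mul_min_eq hLD, ← hT]
    exact optValue_le_sum hLD T
  · rw [sum_Icc_mul_witness _ hRD]
    have hdiv := Nat.div_add_mod' K D
    split_ifs <;> omega
  · rw [← sum_Icc_mul_min_eq hLD, sum_Icc_mul_witness _ hRD, min_eq_left hLD, mul_comm]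
    split_ifs with hR0 <;> simp [hR0]
end

section
/- Let K, D, L be positive integers with L ≤ D ≤ K. Suppose W_1, ..., W_n are D-subsets of {1,...,K} such that for each i, the set W_i \ (W_1 ∪ ... ∪ W_{i−1}) is nonempty with size N_i, and W_1 ∪ ... ∪ W_n = {1,...,K}. For each i, let V_i be an L×D MDS matrix over a field F (every L×L submatrix invertible), and let U_i be the L×K matrix whose restriction to columns indexed by W_i equals V_i and which is zero elsewhere. Then the rank of the matrix obtained by stacking U_1, ..., U_n vertically is at least ∑_{i=1}^n min(L, N_i). -/
/-!
Columns of the stacked matrix are vectors in `F^(n × L)`, split into `n` blocks of length `L`.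
For each `i` pick `min L N_i` columns in `W_i` that lie in no earlier `W_{i'}`. Block `i` of
such a column is a column of `U_i`, hence of `V_i`, and any at most `L` columns of an MDS
matrix are independent; block `i` of every column picked for a later index vanishes, because
`U_i` is supported on `W_i`. This block-triangular shape makes all picked columns independent,
so the rank is at least their number `∑ min L N_i`.
-/

open Finset

section BlockTriangular

variable {R M ι : Type*} [Ring R] [AddCommGroup M] [Module R M]
  [LinearOrder ι] [Fintype ι] {κ : ι → Type*} [∀ i, Fintype (κ i)]
  {N : ι → Type*} [∀ i, AddCommGroup (N i)] [∀ i, Module R (N i)]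

/-- Induction along `ι`: a relation among the `v ⟨i, j⟩`, seen through `p i`, only involves
the indices `i' ≤ i`, and those with `i' < i` already have zero coefficients. -/
theorem linearIndependent_sigma_of_blockTriangular (p : ∀ i, M →ₗ[R] N i)
    (v : (Σ i, κ i) → M) (hzero : ∀ i i' (j : κ i'), i < i' → p i (v ⟨i', j⟩) = 0)
    (hdiag : ∀ i, LinearIndependent R fun j => p i (v ⟨i, j⟩)) :
    LinearIndependent R v := by
  classical
  rw [Fintype.linearIndependent_iff]
  intro g hg
  suffices h : ∀ i j, g ⟨i, j⟩ = 0 from fun s => h s.1 s.2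
  intro i
  induction i using WellFoundedLT.induction with
  | ind i ih =>
    have hblock : ∑ j, g ⟨i, j⟩ • p i (v ⟨i, j⟩) = 0 := by
      have h := congrArg (p i) hg
      rw [map_sum, map_zero, ← univ_sigma_univ, sum_sigma,
        Fintype.sum_eq_single i] at h
      · simpa only [map_smul] using h
      · intro i' hi'
        refine sum_eq_zero fun j _ => ?_
        rcases hi'.lt_or_gt with hlt | hgt
        · rw [ih i' hlt j, zero_smul, map_zero]
        · rw [map_smul, hzero i i' j hgt, smul_zero]
    exact Fintype.linearIndependent_iff.mp (hdiag i) _ hblock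

end BlockTriangular

namespace Matrix

variable {F : Type*} [Field F]

theorem card_le_rank_of_linearIndependent_col {m n ι : Type*} [Finite m] [Fintype n] [Fintype ι]
    (A : Matrix m n F) (c : ι → n) (hc : LinearIndependent F (A.col ∘ c)) :
    Fintype.card ι ≤ A.rank := by
  rw [rank_eq_finrank_span_cols, ← finrank_span_eq_card hc]
  exact Submodule.finrank_mono (Submodule.span_mono (Set.range_comp_subset_range c A.col))

variable {m n : Type*} [Fintype m] [DecidableEq m] [Fintype n]

theorem linearIndepOn_col_of_forall_det_submatrix_ne_zero (V : Matrix m n F)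
    (hV : ∀ f : m → n, Function.Injective f → (V.submatrix id f).det ≠ 0)
    (hmn : Fintype.card m ≤ Fintype.card n) (T : Finset n) (hT : #T ≤ Fintype.card m) :
    LinearIndepOn F V.col T := by
  -- complete `T` to `card m` columns, which form an invertible square submatrix
  obtain ⟨T', hTT', hT'⟩ := exists_superset_card_eq hT hmn
  let f : m → n := (↑) ∘ (Fintype.equivOfCardEq (by simpa using hT'.symm) : m ≃ T')
  have hf : Function.Injective f := Subtype.val_injective.comp (Equiv.injective _)
  have hrange : Set.range f = T' := by
    simp only [f, Set.range_comp, EquivLike.range_eq_univ, Set.image_univ,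
      Subtype.range_coe_subtype, Finset.setOfPred_mem]
  have hli : LinearIndependent F (V.col ∘ f) :=
    linearIndependent_cols_of_det_ne_zero (hV f hf)
  rw [← linearIndepOn_range_iff hf, hrange] at hli
  exact hli.mono (by exact_mod_cast hTT')

theorem linearIndepOn_col_of_submatrix_forall_det_ne_zero {k : Type*} [DecidableEq k]
    (U : Matrix m k F) (V : Matrix m n F) (e : n → k) (he : Function.Injective e)
    (hUV : ∀ l d, U l (e d) = V l d)
    (hV : ∀ f : m → n, Function.Injective f → (V.submatrix id f).det ≠ 0)
    (hmn : Fintype.card m ≤ Fintype.card n) (S : Finset k) (hSe : S ⊆ univ.image e)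
    (hS : #S ≤ Fintype.card m) :
    LinearIndepOn F U.col S := by
  obtain ⟨T, -, rfl⟩ := subset_image_iff.mp hSe
  rw [card_image_of_injective T he] at hS
  have hcomp : U.col ∘ e = V.col := by
    funext d l
    exact hUV l d
  rw [coe_image]
  exact LinearIndepOn.image_of_comp e U.col
    (hcomp ▸ linearIndepOn_col_of_forall_det_submatrix_ne_zero V hV hmn T hS)

end Matrix

theorem stmt8_general {F : Type*} [Field F] (K D L : ℕ) (hLD : L ≤ D)
    (n : ℕ) (W : Fin n → Finset (Fin K))
    (N : Fin n → ℕ)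
    (hN : ∀ i, N i = ((W i) \ (Finset.Iio i).biUnion W).card)
    (V : Fin n → Matrix (Fin L) (Fin D) F)
    (hMDS : ∀ i (f : Fin L → Fin D), Function.Injective f →
      ((V i).submatrix id f).det ≠ 0)
    (e : Fin n → Fin D → Fin K) (he : ∀ i, Function.Injective (e i))
    (heW : ∀ i, Finset.univ.image (e i) = W i)
    (U : Fin n → Matrix (Fin L) (Fin K) F)
    (hU1 : ∀ i l d, U i l (e i d) = V i l d)
    (hU0 : ∀ i l k, k ∉ W i → U i l k = 0) :
    ∑ i, min L (N i) ≤ (Matrix.of fun (p : Fin n × Fin L) k => U p.1 p.2 k).rank := by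
  classical
  choose S hS hScard using fun i =>
    exists_subset_card_eq ((min_le_right L (N i)).trans (hN i).le)
  have hSW : ∀ i, S i ⊆ W i := fun i => (hS i).trans sdiff_subset
  have hfresh : ∀ i i', i < i' → ∀ k ∈ S i', k ∉ W i := fun i i' hlt k hk hkW =>
    (mem_sdiff.mp (hS i' hk)).2 (mem_biUnion.mpr ⟨i, mem_Iio.mpr hlt, hkW⟩)
  set M := Matrix.of fun (p : Fin n × Fin L) k => U p.1 p.2 k
  have hindep : LinearIndependent F (fun s : Σ i, S i => M.col s.2) :=
    linearIndependent_sigma_of_blockTriangular (N := fun _ => Fin L → F)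
    (fun i => LinearMap.funLeft F F fun l => (i, l)) _
    (fun i i' k hlt => funext fun l => hU0 i l k (hfresh i i' hlt k k.2))
    (fun i => (U i).linearIndepOn_col_of_submatrix_forall_det_ne_zero (V i) (e i) (he i)
      (hU1 i) (hMDS i) (by simpa using hLD) (S i) (heW i ▸ hSW i) (by simp [hScard]))
  calc ∑ i, min L (N i) = Fintype.card (Σ i, S i) := by simp [Fintype.card_sigma, hScard]
    _ ≤ M.rank := M.card_le_rank_of_linearIndependent_col _ hindep

/-- The stacked matrix of the embedded MDS matrices U_1,...,U_n has rank at least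
∑ min(L, N_i), where N_i is the number of fresh indices covered by W_i. -/
theorem stmt8 {F : Type*} [Field F] (K D L : ℕ) (hL : 1 ≤ L) (hLD : L ≤ D) (hDK : D ≤ K)
    (n : ℕ) (W : Fin n → Finset (Fin K)) (hWcard : ∀ i, (W i).card = D)
    (N : Fin n → ℕ)
    (hN : ∀ i, N i = ((W i) \ (Finset.Iio i).biUnion W).card)
    (hNpos : ∀ i, 0 < N i)
    (hcover : Finset.univ.biUnion W = (Finset.univ : Finset (Fin K)))
    (V : Fin n → Matrix (Fin L) (Fin D) F)
    (hMDS : ∀ i (f : Fin L → Fin D), Function.Injective f →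
      ((V i).submatrix id f).det ≠ 0)
    (e : Fin n → Fin D → Fin K) (he : ∀ i, Function.Injective (e i))
    (heW : ∀ i, Finset.univ.image (e i) = W i)
    (U : Fin n → Matrix (Fin L) (Fin K) F)
    (hU1 : ∀ i l d, U i l (e i d) = V i l d)
    (hU0 : ∀ i l k, k ∉ W i → U i l k = 0) :
    ∑ i, min L (N i) ≤ (Matrix.of fun (p : Fin n × Fin L) k => U p.1 p.2 k).rank :=
  stmt8_general K D L hLD n W N hN V hMDS e he heW U hU1 hU0
end

section
/- Let V be an L×D MDS matrix over a field, let W ⊆ {1,...,K} with |W| = D, and let U be the L×K matrix supported on columns W with U restricted to W equal to V. Let S be a subset of W with |S| = N, and suppose U' is any matrix whose columns indexed by S are all zero. Then U contains min(L, N) rows that are linearly independent from the row space of U'. -/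
/-!
Let `s` be the set of columns of `V` that `e` sends into `S`; it has at least `N` elements.
By the MDS property any at most `L` columns of `V` are linearly independent (complete them to
`L` columns, which form an invertible matrix), so some `min L N` columns `u ⊆ s` give an
`L × min L N` submatrix of full column rank, hence with `min L N` linearly independent rows `T`.
Restricting vectors to the coordinates `e u ⊆ S` kills the row space of `U'` and maps the rows of
`U` to those of the submatrix, so a combination of the rows `T` of `U` lying in that row space
has all its coefficients zero.
-/

open Module Submodule Finset

theorem Matrix.exists_linearIndepOn_rows_card_eq_rank {F m n : Type*} [Field F] [Fintype m]
    [Fintype n] (A : Matrix m n F) :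
    ∃ T : Finset m, #T = A.rank ∧ LinearIndepOn F A.row (T : Set m) := by
  classical
  obtain ⟨b, -, -, hspan, hb⟩ :=
    exists_linearIndepOn_extension (linearIndepOn_empty F A.row) (Set.empty_subset Set.univ)
  have hspan_eq : span F (A.row '' b) = span F (Set.range A.row) :=
    le_antisymm (span_mono (Set.image_subset_range _ _))
      (span_le.2 (Set.image_univ (f := A.row) ▸ hspan))
  refine ⟨b.toFinset, ?_, by simpa using hb⟩
  rw [A.rank_eq_finrank_span_row, ← hspan_eq, Set.image_eq_range, finrank_span_eq_card hb,
    Set.toFinset_card]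

theorem LinearIndependent.rank_matrix_of_cols {F m n : Type*} [Field F] [Fintype m] [Fintype n]
    {A : Matrix m n F} (h : LinearIndependent F A.col) : A.rank = Fintype.card n := by
  rw [← A.rank_transpose, ← h.rank_matrix]

theorem linearIndepOn_cols_of_mds {F : Type*} [Field F] {L D : ℕ} (hLD : L ≤ D)
    (V : Matrix (Fin L) (Fin D) F)
    (hMDS : ∀ f : Fin L → Fin D, Function.Injective f → (V.submatrix id f).det ≠ 0)
    {t : Finset (Fin D)} (ht : #t ≤ L) : LinearIndepOn F V.col (t : Set (Fin D)) := by
  obtain ⟨w, htw, -, hw⟩ :=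
    exists_subsuperset_card_eq (subset_univ t) ht (by simpa using hLD)
  set f := w.orderEmbOfFin hw
  have hcols : LinearIndependent F (V.submatrix id f).col :=
    Matrix.linearIndependent_cols_iff_isUnit.2
      ((V.submatrix id f).isUnit_iff_isUnit_det.2 (hMDS f f.injective).isUnit)
  have hw_indep : LinearIndepOn F V.col (w : Set (Fin D)) := by
    rw [← range_orderEmbOfFin w hw]
    exact (linearIndepOn_range_iff f.injective _).2 hcols
  exact hw_indep.mono (by exact_mod_cast htw)

theorem coeff_eq_zero_of_sum_smul_mem_of_le_ker {R ι M N : Type*} [Ring R] [AddCommGroup M]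
    [Module R M] [AddCommGroup N] [Module R N] (π : M →ₗ[R] N) {P : Submodule R M}
    (hP : P ≤ LinearMap.ker π) {u : ι → M} {T : Finset ι} (hT : LinearIndepOn R (π ∘ u) T)
    {c : ι → R} (hc : ∑ i ∈ T, c i • u i ∈ P) : ∀ i ∈ T, c i = 0 := by
  refine linearIndepOn_finset_iff.1 hT c ?_
  simpa using hP hc

theorem stmt9_general {F : Type*} [Field F] {ι : Type*} (K D L N : ℕ)
    (hLD : L ≤ D)
    (V : Matrix (Fin L) (Fin D) F)
    (hMDS : ∀ f : Fin L → Fin D, Function.Injective f → (V.submatrix id f).det ≠ 0)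
    (W : Finset (Fin K))
    (e : Fin D → Fin K) (heW : Finset.univ.image e = W)
    (U : Matrix (Fin L) (Fin K) F)
    (hU1 : ∀ l d, U l (e d) = V l d)
    (S : Finset (Fin K)) (hSW : S ⊆ W) (hS : S.card = N)
    (U' : Matrix ι (Fin K) F) (hU' : ∀ r, ∀ k ∈ S, U' r k = 0) :
    ∃ T : Finset (Fin L), T.card = min L N ∧
      ∀ c : Fin L → F,
        (∑ i ∈ T, c i • U i) ∈ Submodule.span F (Set.range fun r => U' r) →
          ∀ i ∈ T, c i = 0 := by
  classical
  set s : Finset (Fin D) := univ.filter fun d => e d ∈ S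
  have hS_sub : S ⊆ s.image e := fun k hk => by
    obtain ⟨d, -, rfl⟩ := mem_image.1 (heW ▸ hSW hk)
    exact mem_image_of_mem e (mem_filter.2 ⟨mem_univ d, hk⟩)
  have hNs : N ≤ #s := hS ▸ (card_le_card hS_sub).trans card_image_le
  obtain ⟨u, hus, hu⟩ := exists_subset_card_eq ((min_le_right L N).trans hNs)
  set B := V.submatrix id ((↑) : u → Fin D)
  have hB : LinearIndependent F B.col :=
    linearIndepOn_cols_of_mds hLD V hMDS (hu.trans_le (min_le_left L N))
  have hrank : B.rank = min L N := by
    rw [hB.rank_matrix_of_cols, Fintype.card_coe, hu]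
  obtain ⟨T, hT, hT_indep⟩ := B.exists_linearIndepOn_rows_card_eq_rank
  let π : (Fin K → F) →ₗ[F] (u → F) := LinearMap.funLeft F F (e ∘ (↑))
  have hπU : π ∘ U = B.row := funext fun i => funext fun d => hU1 i d
  have hker : span F (Set.range fun r => U' r) ≤ LinearMap.ker π := by
    refine span_le.2 ?_
    rintro _ ⟨r, rfl⟩
    exact funext fun d => hU' r _ (mem_filter.1 (hus d.2)).2
  exact ⟨T, hT.trans hrank, fun c hc =>
    coeff_eq_zero_of_sum_smul_mem_of_le_ker π hker (hπU ▸ hT_indep) hc⟩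

/-- The embedded MDS matrix U contains min(L,N) rows linearly independent from the
row space of any matrix U' vanishing on the N columns S ⊆ W. -/
theorem stmt9 {F : Type*} [Field F] {ι : Type*} (K D L N : ℕ)
    (hL : 1 ≤ L) (hLD : L ≤ D) (hDK : D ≤ K)
    (V : Matrix (Fin L) (Fin D) F)
    (hMDS : ∀ f : Fin L → Fin D, Function.Injective f → (V.submatrix id f).det ≠ 0)
    (W : Finset (Fin K)) (hW : W.card = D)
    (e : Fin D → Fin K) (he : Function.Injective e) (heW : Finset.univ.image e = W)
    (U : Matrix (Fin L) (Fin K) F)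
    (hU1 : ∀ l d, U l (e d) = V l d) (hU0 : ∀ l k, k ∉ W → U l k = 0)
    (S : Finset (Fin K)) (hSW : S ⊆ W) (hS : S.card = N)
    (U' : Matrix ι (Fin K) F) (hU' : ∀ r, ∀ k ∈ S, U' r k = 0) :
    ∃ T : Finset (Fin L), T.card = min L N ∧
      ∀ c : Fin L → F,
        (∑ i ∈ T, c i • U i) ∈ Submodule.span F (Set.range fun r => U' r) →
          ∀ i ∈ T, c i = 0 :=
  stmt9_general K D L N hLD V hMDS W e heW U hU1 S hSW hS U' hU'
end
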